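/- Let (Ω, F, P) be a complete probability space and ξ^1, ξ^2, … : Ω → [0,1] be i.i.d. random variables, each uniformly distributed on [0,1]. Then there exist a Carathéodory function f : [0,1] × ℝ → ℝ with f(ξ,·) 1-Lipschitz on ℝ for every ξ ∈ [0,1], and a sequence δ^ν ∈ (0,1] decreasing to 0, such that for every ν ≥ 1 the set D^ν = {x ∈ [0,1] : for every ξ ∈ [0,1], f(ξ,·) is continuously differentiable on B(x, δ^ν)} is nonempty, and such that for every sequence r^ν with 0 ≤ r^ν ≤ δ^ν, P-almost surely both of the following hold: liminf_{ν→∞} sup_{x ∈ D^ν} inf_{y ∈ B(x, r^ν)} | (1/ν) Σ_{i=1}^{ν} ∂_x f(ξ^i, x) − E[∂_x f(ξ^1, y)] | ≥ 1/2, and liminf_{ν→∞} sup_{x ∈ D^ν} inf_{y ∈ B(x, r^ν)} | E[∂_x f(ξ^1, x)] − (1/ν) Σ_{i=1}^{ν} ∂_x f(ξ^i, y) | ≥ 1/2, where ∂_x f(ξ, ·) denotes the derivative of f(ξ, ·) (well defined on B(x, δ^ν) for x ∈ D^ν). -/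

import Mathlib

open MeasureTheory ProbabilityTheory Filter

noncomputable section Aux
open Set


/-- level decoded from x : x ∈ [2^{-(ν+1)}, 2^{-ν}) ↦ ν -/
def NX (x : ℝ) : ℕ := (-(⌊Real.logb 2 x⌋) - 1).toNat

/-- number of pieces at level ν -/
def MM (ν : ℕ) : ℕ := (2*ν)^ν

/-- left endpoint of piece j at level ν -/
def LL (ν j : ℕ) : ℝ := (1 + (j : ℝ) / (MM ν)) / 2^(ν+1)

/-- piece index decoded from x -/
def JX (x : ℝ) : ℕ := (⌊(x * 2^((NX x) + 1) - 1) * (MM (NX x))⌋).toNat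

/-- decoded cell set -/
def DDf (ν j : ℕ) : Finset ℕ := (Finset.range ν).image (fun i => j / (2*ν)^i % (2*ν))

def gg (t x : ℝ) : ℝ :=
  if (2:ℝ)⁻¹ ≤ x then 1
  else if 0 ≤ ⌊(2 * (NX x) : ℝ) * t⌋ ∧ (⌊(2 * (NX x) : ℝ) * t⌋).toNat ∈ DDf (NX x) (JX x) then 1
  else -1

def hh (ν j : ℕ) (t : ℝ) : ℝ :=
  if 0 ≤ ⌊(2 * (ν:ℝ)) * t⌋ ∧ (⌊(2 * (ν:ℝ)) * t⌋).toNat ∈ DDf ν j then 1 else -1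

def ff (t x : ℝ) : ℝ := ∫ u in Set.Ioc 0 x, gg t u

def dd (ν : ℕ) : ℝ := 1 / (2^(ν+3) * MM ν)

lemma MM_pos (ν : ℕ) : 0 < MM ν := by
  cases ν with
  | zero => simp [MM]
  | succ n => exact pow_pos (by omega) _

lemma MM_mono : Monotone MM := by
  apply monotone_nat_of_le_succ
  intro n
  calc (2*n)^n ≤ (2*(n+1))^n := Nat.pow_le_pow_left (by omega) n
    _ ≤ (2*(n+1))^(n+1) := Nat.pow_le_pow_right (by omega) (by omega)

lemma dd_pos (ν : ℕ) : 0 < dd ν := by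
  have h : (0:ℝ) < MM ν := by exact_mod_cast MM_pos ν
  rw [dd]; positivity

lemma dd_le (ν : ℕ) : dd ν ≤ 1/8 := by
  have h1 : (1:ℝ) ≤ MM ν := by exact_mod_cast MM_pos ν
  have h2 : (8:ℝ) ≤ 2^(ν+3) := by
    calc (8:ℝ) = 2^3 := by norm_num
    _ ≤ 2^(ν+3) := by apply pow_le_pow_right₀ (by norm_num) (by omega)
  rw [dd, div_le_div_iff₀ (by positivity) (by norm_num)]
  nlinarith

lemma dd_anti : Antitone dd := by
  apply antitone_nat_of_succ_le
  intro n
  have h1 : (0:ℝ) < 2^(n+3) * MM n := by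
    have : (0:ℝ) < MM n := by exact_mod_cast MM_pos n
    positivity
  have h2 : (0:ℝ) < 2^(n+1+3) * MM (n+1) := by
    have : (0:ℝ) < MM (n+1) := by exact_mod_cast MM_pos (n+1)
    positivity
  apply div_le_div_of_nonneg_left (by norm_num) h1
  gcongr
  · norm_num
  · omega
  · exact_mod_cast MM_mono (by omega : n ≤ n+1)

lemma dd_tendsto : Tendsto dd atTop (nhds 0) := by
  have h := tendsto_pow_atTop_nhds_zero_of_lt_one (by norm_num : (0:ℝ) ≤ 1/2) (by norm_num : (1/2:ℝ) < 1)
  apply squeeze_zero (fun n => (dd_pos n).le) _ h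
  intro n
  have h1 : (1:ℝ) ≤ MM n := by exact_mod_cast MM_pos n
  have h2 : (0:ℝ) < 2^(n+3) := by positivity
  rw [dd, div_pow, one_pow, one_div, one_div]
  rw [inv_le_inv₀ (by positivity) (by positivity)]
  calc (2:ℝ)^n ≤ 2^(n+3) := by apply pow_le_pow_right₀ (by norm_num) (by omega)
    _ ≤ 2^(n+3) * MM n := by nlinarith


-- digits lemmas
lemma sum_digits_lt (B : ℕ) (c : ℕ → ℕ) (hc : ∀ i, c i < B) :
    ∀ k, (∑ i ∈ Finset.range k, c i * B^i) < B^k := by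
  intro k
  induction k with
  | zero => simp
  | succ n ih =>
    rw [Finset.sum_range_succ, pow_succ]
    have h1 : c n + 1 ≤ B := hc n
    have h2 : (∑ i ∈ Finset.range n, c i * B^i) + 1 ≤ B^n := ih
    nlinarith [pow_pos (show 0 < B by omega) n]

lemma digit_extract (B : ℕ) (hB : 0 < B) (c : ℕ → ℕ) (hc : ∀ i, c i < B) (n k : ℕ) (hk : k < n) :
    (∑ i ∈ Finset.range n, c i * B^i) / B^k % B = c k := by
  have hsplit : ∑ i ∈ Finset.range n, c i * B^i
      = (∑ i ∈ Finset.range k, c i * B^i) + (c k + B * (∑ i ∈ Finset.range (n - (k+1)), c (k+1+i) * B^i)) * B^k := by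
    have h1 : ∑ i ∈ Finset.range n, c i * B^i
        = ∑ i ∈ Finset.range (k+1), c i * B^i + ∑ i ∈ Finset.Ico (k+1) n, c i * B^i := by
      rw [Finset.range_eq_Ico, Finset.range_eq_Ico]
      exact (Finset.sum_Ico_consecutive (fun i => c i * B^i) (by omega : 0 ≤ k+1) (by omega : k+1 ≤ n)).symm
    rw [h1, Finset.sum_range_succ]
    have h2 : ∑ i ∈ Finset.Ico (k+1) n, c i * B^i
        = ∑ i ∈ Finset.range (n - (k+1)), c (k+1+i) * B^(k+1+i) := by
      rw [Finset.sum_Ico_eq_sum_range]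
    rw [h2]
    have h3 : ∀ i, c (k+1+i) * B^(k+1+i) = (c (k+1+i) * B^i) * (B * B^k) := by
      intro i; rw [pow_add, pow_succ]; ring
    rw [Finset.sum_congr rfl (fun i _ => h3 i), ← Finset.sum_mul]
    ring
  rw [hsplit]
  have hlt : (∑ i ∈ Finset.range k, c i * B^i) < B^k := sum_digits_lt B c hc k
  rw [Nat.add_mul_div_right _ _ (pow_pos hB k), Nat.div_eq_of_lt hlt, zero_add,
    Nat.add_mul_mod_self_left, Nat.mod_eq_of_lt (hc k)]


-- decode lemma
lemma decode {ν j : ℕ} (hν : 1 ≤ ν) (hj : j < MM ν) {x : ℝ}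
    (hx : LL ν j ≤ x) (hx' : x < LL ν (j+1)) :
    NX x = ν ∧ JX x = j ∧ x < 2⁻¹ ∧ 0 < x := by
  have hM : (0:ℝ) < MM ν := by exact_mod_cast MM_pos ν
  have hMj : (j:ℝ) / MM ν ≥ 0 := by positivity
  have hMj1 : ((j:ℝ)+1) / MM ν ≤ 1 := by
    rw [div_le_one hM]
    exact_mod_cast hj
  have hp : (0:ℝ) < 2^(ν+1) := by positivity
  have hlow : (2^(ν+1):ℝ)⁻¹ ≤ x := by
    refine le_trans ?_ hx
    rw [LL, le_div_iff₀ hp, inv_mul_cancel₀ (ne_of_gt hp)]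
    linarith
  have hup : x < (2^ν : ℝ)⁻¹ := by
    refine lt_of_lt_of_le hx' ?_
    rw [LL, div_le_iff₀ hp]
    have : ((j:ℝ)+1) / MM ν ≤ 1 := hMj1
    have h2 : ((2:ℝ)^ν)⁻¹ * 2^(ν+1) = 2 := by
      rw [pow_succ]; field_simp
    push_cast
    rw [h2]
    linarith
  have hx0 : 0 < x := lt_of_lt_of_le (by positivity) hlow
  have hhalf : x < 2⁻¹ := by
    refine lt_of_lt_of_le hup ?_
    rw [inv_le_inv₀ (by positivity) (by norm_num)]
    calc (2:ℝ) = 2^1 := (pow_one 2).symm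
    _ ≤ 2^ν := pow_le_pow_right₀ (by norm_num) hν
  -- floor of logb
  have hfl : ⌊Real.logb 2 x⌋ = -(ν+1 : ℤ) := by
    rw [Int.floor_eq_iff]
    constructor
    · have : Real.logb 2 ((2^(ν+1):ℝ)⁻¹) ≤ Real.logb 2 x :=
        Real.logb_le_logb_of_le (by norm_num) (by positivity) hlow
      refine le_trans (le_of_eq ?_) this
      rw [Real.logb_inv, Real.logb_pow, Real.logb_self_eq_one (by norm_num : (1:ℝ) < 2)]
      push_cast; ring
    · have : Real.logb 2 x < Real.logb 2 ((2^ν:ℝ)⁻¹) :=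
        Real.logb_lt_logb (by norm_num) hx0 hup
      refine lt_of_lt_of_le this (le_of_eq ?_)
      rw [Real.logb_inv, Real.logb_pow, Real.logb_self_eq_one (by norm_num : (1:ℝ) < 2)]
      push_cast; ring
  have hNX : NX x = ν := by
    rw [NX, hfl]
    simp
  refine ⟨hNX, ?_, hhalf, hx0⟩
  -- JX
  have hXlow : (j:ℝ) ≤ (x * 2^(ν+1) - 1) * MM ν := by
    have h1 : 1 + (j:ℝ)/MM ν ≤ x * 2^(ν+1) := by
      rw [LL, div_le_iff₀ hp] at hx
      linarith
    have h2 : (j:ℝ)/MM ν ≤ x * 2^(ν+1) - 1 := by linarith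
    rw [div_le_iff₀ hM] at h2
    nlinarith
  have hXup : (x * 2^(ν+1) - 1) * MM ν < (j:ℝ) + 1 := by
    have : x * 2^(ν+1) < 1 + ((j:ℝ)+1)/MM ν := by
      rw [LL, lt_div_iff₀ hp] at hx'
      push_cast at hx'
      linarith
    have h2 : (x * 2^(ν+1) - 1) < ((j:ℝ)+1)/MM ν := by linarith
    calc (x * 2^(ν+1) - 1) * MM ν < (((j:ℝ)+1)/MM ν) * MM ν := by
          exact mul_lt_mul_of_pos_right h2 hM
    _ = (j:ℝ) + 1 := by field_simp
  have hfj : ⌊(x * 2^(ν+1) - 1) * (MM ν : ℝ)⌋ = (j:ℤ) := by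
    rw [Int.floor_eq_iff]
    constructor
    · exact_mod_cast hXlow
    · push_cast; exact hXup
  rw [JX, hNX, hfj]
  simp

-- measurability
lemma measurable_NX : Measurable NX := by
  apply Measurable.comp (measurable_of_countable (fun z : ℤ => (-z - 1).toNat))
  apply Measurable.floor
  exact (Real.measurable_log.comp measurable_id).div_const _

lemma measurable_JX : Measurable JX := by
  apply Measurable.comp (measurable_of_countable Int.toNat)
  apply Measurable.floor
  apply Measurable.mul
  · apply Measurable.sub _ measurable_const
    apply Measurable.mul measurable_id
    exact (measurable_of_countable (fun n : ℕ => (2:ℝ)^(n+1))).comp measurable_NX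
  · exact (measurable_of_countable (fun n : ℕ => (MM n : ℝ))).comp measurable_NX

lemma measurable_gg : Measurable (Function.uncurry gg) := by
  unfold Function.uncurry gg
  apply Measurable.ite
  · exact measurableSet_le measurable_const (measurable_snd)
  · exact measurable_const
  apply Measurable.ite _ measurable_const measurable_const
  have hmap : Measurable (fun p : ℝ × ℝ => (⌊(2 * (NX p.2) : ℝ) * p.1⌋, NX p.2, JX p.2)) := by
    apply Measurable.prod
    · apply Measurable.floor
      exact ((measurable_of_countable (fun n : ℕ => 2 * (n:ℝ))).comp
        (measurable_NX.comp measurable_snd)).mul measurable_fst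
    · exact (measurable_NX.comp measurable_snd).prod (measurable_JX.comp measurable_snd)
  have : {p : ℝ × ℝ | 0 ≤ ⌊(2 * (NX p.2) : ℝ) * p.1⌋ ∧ (⌊(2 * (NX p.2) : ℝ) * p.1⌋).toNat ∈ DDf (NX p.2) (JX p.2)}
      = (fun p : ℝ × ℝ => (⌊(2 * (NX p.2) : ℝ) * p.1⌋, NX p.2, JX p.2)) ⁻¹'
        {q : ℤ × ℕ × ℕ | 0 ≤ q.1 ∧ q.1.toNat ∈ DDf q.2.1 q.2.2} := by rfl
  rw [this]
  exact hmap (Set.to_countable _).measurableSet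

lemma measurable_gg_t (t : ℝ) : Measurable (gg t) := by
  have : gg t = (Function.uncurry gg) ∘ (fun u => (t, u)) := rfl
  rw [this]
  exact measurable_gg.comp (measurable_const.prodMk measurable_id)

lemma measurable_hh (ν j : ℕ) : Measurable (hh ν j) := by
  unfold hh
  apply Measurable.ite _ measurable_const measurable_const
  have hmap : Measurable (fun t : ℝ => ⌊(2 * (ν:ℝ)) * t⌋) :=
    Measurable.floor (measurable_const.mul measurable_id)
  have : {t : ℝ | 0 ≤ ⌊(2 * (ν:ℝ)) * t⌋ ∧ (⌊(2 * (ν:ℝ)) * t⌋).toNat ∈ DDf ν j}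
      = (fun t : ℝ => ⌊(2 * (ν:ℝ)) * t⌋) ⁻¹' {d : ℤ | 0 ≤ d ∧ d.toNat ∈ DDf ν j} := rfl
  rw [this]
  exact hmap (Set.to_countable _).measurableSet

lemma gg_abs_le (t x : ℝ) : |gg t x| ≤ 1 := by
  unfold gg
  split_ifs <;> simp

lemma integrableOn_gg (t : ℝ) (s : Set ℝ) (hs : MeasurableSet s) (hfin : volume s < ⊤) :
    IntegrableOn (gg t) s := by
  haveI : IsFiniteMeasure (volume.restrict s) := by
    constructor
    rw [Measure.restrict_apply_univ]
    exact hfin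
  apply Integrable.mono' (integrable_const 1)
  · exact ((measurable_gg_t t).aestronglyMeasurable)
  · exact ae_of_all _ (fun u => by simpa using gg_abs_le t u)

-- additivity helper
lemma ff_diff (t : ℝ) {a b : ℝ} (ha : 0 ≤ a) (hab : a ≤ b) :
    ff t b - ff t a = ∫ u in Set.Ioc a b, gg t u := by
  unfold ff
  have hsplit : Set.Ioc (0:ℝ) b = Set.Ioc 0 a ∪ Set.Ioc a b := (Set.Ioc_union_Ioc_eq_Ioc ha hab).symm
  rw [hsplit, setIntegral_union (Set.Ioc_disjoint_Ioc_of_le le_rfl) measurableSet_Ioc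
    (integrableOn_gg t _ measurableSet_Ioc (by simp [measure_Ioc_lt_top]))
    (integrableOn_gg t _ measurableSet_Ioc (by simp [measure_Ioc_lt_top]))]
  ring

lemma abs_setIntegral_Ioc_gg_le (t a b : ℝ) (hab : a ≤ b) :
    |∫ u in Set.Ioc a b, gg t u| ≤ b - a := by
  haveI : IsFiniteMeasure (volume.restrict (Set.Ioc a b)) := by
    constructor
    rw [Measure.restrict_apply_univ]
    exact measure_Ioc_lt_top
  have h := norm_integral_le_of_norm_le_const (μ := volume.restrict (Set.Ioc a b))
    (f := gg t) (C := 1) (ae_of_all _ (fun u => by simpa using gg_abs_le t u))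
  rw [Real.norm_eq_abs] at h
  refine h.trans ?_
  rw [measureReal_restrict_apply_univ, Real.volume_real_Ioc_of_le hab, one_mul]

lemma ff_lipschitz (t : ℝ) : LipschitzWith 1 (ff t) := by
  apply LipschitzWith.of_dist_le_mul
  intro x y
  rw [Real.dist_eq, Real.dist_eq, NNReal.coe_one, one_mul]
  wlog h : y ≤ x generalizing x y
  · rw [abs_sub_comm, abs_sub_comm x y]
    exact this y x (le_of_not_ge h)
  rcases le_or_gt x 0 with hx | hx
  · have hxe : Set.Ioc (0:ℝ) x = ∅ := Set.Ioc_eq_empty (by linarith)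
    have hye : Set.Ioc (0:ℝ) y = ∅ := Set.Ioc_eq_empty (by linarith)
    unfold ff
    rw [hxe, hye]
    simp [abs_nonneg]
  rcases le_or_gt y 0 with hy | hy
  · have hye : Set.Ioc (0:ℝ) y = ∅ := Set.Ioc_eq_empty (by linarith)
    have : ff t y = 0 := by unfold ff; rw [hye]; simp
    rw [this, sub_zero]
    have h2 : |ff t x - ff t 0| ≤ x - 0 := by
      rw [show ff t x - ff t 0 = ∫ u in Set.Ioc 0 x, gg t u from by
        rw [ff_diff t le_rfl hx.le]]
      exact abs_setIntegral_Ioc_gg_le t 0 x hx.le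
    have : ff t 0 = 0 := by unfold ff; simp
    rw [this, sub_zero] at h2
    refine h2.trans ?_
    rw [abs_of_nonneg (by linarith)]
    linarith
  · rw [show ff t x - ff t y = ∫ u in Set.Ioc y x, gg t u from by rw [ff_diff t hy.le h]]
    have := abs_setIntegral_Ioc_gg_le t y x h
    refine this.trans ?_
    rw [abs_of_nonneg (by linarith)]

lemma LL_pos (ν j : ℕ) : 0 < LL ν j := by
  have hM : (0:ℝ) < MM ν := by exact_mod_cast MM_pos ν
  rw [LL]; positivity

lemma LL_succ (ν j : ℕ) : LL ν (j+1) = LL ν j + 4 * dd ν := by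
  have hM : (MM ν : ℝ) ≠ 0 := by
    have := MM_pos ν; positivity
  rw [LL, LL, dd]
  have h2 : (2:ℝ)^(ν+3) = 2^(ν+1) * 4 := by rw [pow_add, pow_add]; ring
  field_simp
  rw [h2]; push_cast; ring

lemma gg_eq_hh {ν j : ℕ} (hν : 1 ≤ ν) (hj : j < MM ν) (t : ℝ) {u : ℝ}
    (hu : u ∈ Set.Ico (LL ν j) (LL ν (j+1))) : gg t u = hh ν j t := by
  obtain ⟨hN, hJ, hhalf, -⟩ := decode hν hj hu.1 hu.2
  rw [gg, if_neg (not_le.2 hhalf), hN, hJ, hh]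

lemma ff_affine {ν j : ℕ} (hν : 1 ≤ ν) (hj : j < MM ν) (t : ℝ) {y : ℝ}
    (hy : y ∈ Set.Ico (LL ν j) (LL ν (j+1))) :
    ff t y = ff t (LL ν j) + hh ν j t * (y - LL ν j) := by
  have h0 : (0:ℝ) ≤ LL ν j := (LL_pos ν j).le
  have hdiff := ff_diff t h0 hy.1
  have hcong : ∫ u in Set.Ioc (LL ν j) y, gg t u = ∫ _u in Set.Ioc (LL ν j) y, hh ν j t := by
    apply setIntegral_congr_fun measurableSet_Ioc
    intro u hu
    exact gg_eq_hh hν hj t ⟨hu.1.le, lt_of_le_of_lt hu.2 hy.2⟩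
  rw [hcong, setIntegral_const, Real.volume_real_Ioc_of_le (by linarith [hy.1]), smul_eq_mul] at hdiff
  linarith [hdiff]

lemma ff_affine_top (t : ℝ) {y : ℝ} (hy : (2:ℝ)⁻¹ ≤ y) :
    ff t y = ff t 2⁻¹ + 1 * (y - 2⁻¹) := by
  have hdiff := ff_diff t (by norm_num : (0:ℝ) ≤ 2⁻¹) hy
  have hcong : ∫ u in Set.Ioc (2⁻¹:ℝ) y, gg t u = ∫ _u in Set.Ioc (2⁻¹:ℝ) y, (1:ℝ) := by
    apply setIntegral_congr_fun measurableSet_Ioc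
    intro u hu
    rw [gg, if_pos hu.1.le]
  rw [hcong, setIntegral_const, Real.volume_real_Ioc_of_le (by linarith), smul_eq_mul] at hdiff
  linarith [hdiff]

lemma contDiffOn_of_affine {t c m L : ℝ} {s : Set ℝ}
    (h : ∀ y ∈ s, ff t y = c + m * (y - L)) : ContDiffOn ℝ 1 (ff t) s := by
  apply ContDiffOn.congr (f := fun y => c + m * (y - L))
  · exact (contDiff_const.add (contDiff_const.mul (contDiff_id.sub contDiff_const))).contDiffOn
  · exact h

lemma deriv_of_affine {t c m L : ℝ} {U : Set ℝ} (hU : IsOpen U) {y : ℝ} (hy : y ∈ U)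
    (h : ∀ z ∈ U, ff t z = c + m * (z - L)) : deriv (ff t) y = m := by
  have hev : ff t =ᶠ[nhds y] fun z => c + m * (z - L) :=
    Filter.eventually_of_mem (hU.mem_nhds hy) h
  rw [hev.deriv_eq]
  have : HasDerivAt (fun z => c + m * (z - L)) (m * 1) y :=
    (((hasDerivAt_id y).sub_const L).const_mul m).const_add c
  rw [this.deriv, mul_one]

lemma abs_deriv_ff_le (t z : ℝ) : |deriv (ff t) z| ≤ 1 := by
  have := norm_deriv_le_of_lipschitz (𝕜 := ℝ) (ff_lipschitz t) (x₀ := z)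
  simpa using this

def AA (ν j : ℕ) : Set ℝ := {t : ℝ | 0 ≤ ⌊(2 * (ν:ℝ)) * t⌋ ∧ (⌊(2 * (ν:ℝ)) * t⌋).toNat ∈ DDf ν j}

lemma measurableSet_AA (ν j : ℕ) : MeasurableSet (AA ν j) := by
  have hmap : Measurable (fun t : ℝ => ⌊(2 * (ν:ℝ)) * t⌋) :=
    Measurable.floor (measurable_const.mul measurable_id)
  have : AA ν j = (fun t : ℝ => ⌊(2 * (ν:ℝ)) * t⌋) ⁻¹' {d : ℤ | 0 ≤ d ∧ d.toNat ∈ DDf ν j} := rfl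
  rw [this]
  exact hmap (Set.to_countable _).measurableSet

lemma hh_eq_indicator (ν j : ℕ) (t : ℝ) :
    hh ν j t = 2 * (AA ν j).indicator (1 : ℝ → ℝ) t - 1 := by
  by_cases h : t ∈ AA ν j
  · rw [hh, if_pos (by exact h), Set.indicator_of_mem h]; norm_num
  · rw [hh, if_neg (by exact h), Set.indicator_of_notMem h]; norm_num

lemma AA_subset (ν j : ℕ) (hν : 1 ≤ ν) :
    AA ν j ⊆ ⋃ d ∈ DDf ν j, Set.Ico ((d:ℝ)/(2*ν)) (((d:ℝ)+1)/(2*ν)) := by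
  intro t ht
  obtain ⟨h0, hmem⟩ := ht
  have hν' : (0:ℝ) < 2 * ν := by positivity
  refine Set.mem_biUnion hmem ?_
  have hcast : ((⌊(2 * (ν:ℝ)) * t⌋).toNat : ℤ) = ⌊(2 * (ν:ℝ)) * t⌋ := Int.toNat_of_nonneg h0
  have h1 : ((⌊(2 * (ν:ℝ)) * t⌋).toNat : ℝ) ≤ (2 * ν) * t := by
    rw [show ((⌊(2 * (ν:ℝ)) * t⌋).toNat : ℝ) = ((⌊(2 * (ν:ℝ)) * t⌋ : ℤ) : ℝ) from by exact_mod_cast congrArg (fun z : ℤ => (z : ℝ)) hcast]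
    exact Int.floor_le _
  have h2 : (2 * (ν:ℝ)) * t < ((⌊(2 * (ν:ℝ)) * t⌋).toNat : ℝ) + 1 := by
    rw [show ((⌊(2 * (ν:ℝ)) * t⌋).toNat : ℝ) = ((⌊(2 * (ν:ℝ)) * t⌋ : ℤ) : ℝ) from by exact_mod_cast congrArg (fun z : ℤ => (z : ℝ)) hcast]
    exact Int.lt_floor_add_one _
  constructor
  · rw [div_le_iff₀ hν']
    linarith
  · rw [lt_div_iff₀ hν']
    linarith

lemma volume_AA_le (ν j : ℕ) (hν : 1 ≤ ν) : volume (AA ν j) ≤ ENNReal.ofReal (1/2) := by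
  have hν' : (0:ℝ) < 2 * ν := by positivity
  calc volume (AA ν j) ≤ volume (⋃ d ∈ DDf ν j, Set.Ico ((d:ℝ)/(2*ν)) (((d:ℝ)+1)/(2*ν))) :=
        measure_mono (AA_subset ν j hν)
  _ ≤ ∑ d ∈ DDf ν j, volume (Set.Ico ((d:ℝ)/(2*ν)) (((d:ℝ)+1)/(2*ν))) :=
        measure_biUnion_finset_le _ _
  _ = ∑ _d ∈ DDf ν j, ENNReal.ofReal (1/(2*ν)) := by
        apply Finset.sum_congr rfl
        intro d _
        rw [Real.volume_Ico]
        congr 1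
        field_simp
        ring
  _ = (DDf ν j).card * ENNReal.ofReal (1/(2*ν)) := by
        rw [Finset.sum_const, nsmul_eq_mul]
  _ ≤ (ν : ENNReal) * ENNReal.ofReal (1/(2*ν)) := by
        apply mul_le_mul_left
        exact_mod_cast (Finset.card_image_le.trans (by simp) : (DDf ν j).card ≤ ν)
  _ = ENNReal.ofReal ((ν:ℝ) * (1/(2*ν))) := by
        rw [ENNReal.ofReal_mul (by positivity)]
        congr 1
        exact (ENNReal.ofReal_natCast ν).symm
  _ = ENNReal.ofReal (1/2) := by
        congr 1
        have : (ν:ℝ) ≠ 0 := by positivity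
        field_simp

lemma integral_hh (ν j : ℕ) (hν : 1 ≤ ν) :
    (∫ t in Set.Icc (0:ℝ) 1, hh ν j t) ≤ 0 ∧ (-1:ℝ) ≤ ∫ t in Set.Icc (0:ℝ) 1, hh ν j t := by
  have hA := measurableSet_AA ν j
  haveI : IsFiniteMeasure (volume.restrict (Set.Icc (0:ℝ) 1)) := by
    constructor
    rw [Measure.restrict_apply_univ]
    simp [Real.volume_Icc]
  have hind : Integrable ((AA ν j).indicator (1 : ℝ → ℝ)) (volume.restrict (Set.Icc (0:ℝ) 1)) := by
    apply Integrable.mono' (integrable_const 1)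
    · exact ((measurable_const.indicator hA).aestronglyMeasurable)
    · exact ae_of_all _ (fun u => by
        rw [Real.norm_eq_abs]
        by_cases h : u ∈ AA ν j <;> simp [Set.indicator_of_mem, Set.indicator_of_notMem, h])
  have hcalc : (∫ t in Set.Icc (0:ℝ) 1, hh ν j t)
      = 2 * (volume.restrict (Set.Icc (0:ℝ) 1) (AA ν j)).toReal - 1 := by
    rw [show (fun t => hh ν j t) = fun t => 2 * (AA ν j).indicator (1 : ℝ → ℝ) t - 1 from
      funext (hh_eq_indicator ν j)]
    rw [integral_sub (hind.const_mul 2) (integrable_const 1)]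
    rw [MeasureTheory.integral_const_mul, integral_indicator_one hA, integral_const]
    rw [measureReal_restrict_apply_univ]
    simp [Real.volume_Icc]
    rfl
  have hle : (volume.restrict (Set.Icc (0:ℝ) 1) (AA ν j)).toReal ≤ 1/2 := by
    apply ENNReal.toReal_le_of_le_ofReal (by norm_num)
    refine le_trans ?_ (volume_AA_le ν j hν)
    rw [Measure.restrict_apply hA]
    exact measure_mono Set.inter_subset_left
  constructor
  · rw [hcalc]; linarith
  · rw [hcalc]
    have : (0:ℝ) ≤ (volume.restrict (Set.Icc (0:ℝ) 1) (AA ν j)).toReal := ENNReal.toReal_nonneg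
    linarith

lemma hh_one {ν j : ℕ} {t : ℝ} (ht : 0 ≤ t) (hmem : (⌊(2 * (ν:ℝ)) * t⌋).toNat ∈ DDf ν j) :
    hh ν j t = 1 := by
  rw [hh, if_pos]
  exact ⟨Int.floor_nonneg.2 (by positivity), hmem⟩

lemma measurable_ff_x (x : ℝ) : Measurable (fun t => ff t x) := by
  have hsm : MeasureTheory.StronglyMeasurable (Function.uncurry gg) :=
    measurable_gg.stronglyMeasurable
  have := hsm.integral_prod_right' (ν := volume.restrict (Set.Ioc 0 x))
  exact this.measurable

lemma avg_bound (ν : ℕ) (q : ℕ → ℝ) (z : ℝ) :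
    |(ν:ℝ)⁻¹ * ∑ i ∈ Finset.range ν, deriv (ff (q i)) z| ≤ 1 := by
  rcases Nat.eq_zero_or_pos ν with h | h
  · subst h; simp
  rw [abs_mul]
  have h1 : |∑ i ∈ Finset.range ν, deriv (ff (q i)) z| ≤ (ν:ℝ) := by
    refine (Finset.abs_sum_le_sum_abs _ _).trans ?_
    calc ∑ i ∈ Finset.range ν, |deriv (ff (q i)) z| ≤ ∑ _i ∈ Finset.range ν, (1:ℝ) :=
          Finset.sum_le_sum (fun i _ => abs_deriv_ff_le _ _)
    _ = ν := by simp
  have h2 : |(ν:ℝ)⁻¹| = (ν:ℝ)⁻¹ := abs_of_nonneg (by positivity)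
  rw [h2]
  have hν : (0:ℝ) < ν := by exact_mod_cast h
  calc (ν:ℝ)⁻¹ * |∑ i ∈ Finset.range ν, deriv (ff (q i)) z| ≤ (ν:ℝ)⁻¹ * ν := by
        apply mul_le_mul_of_nonneg_left h1 (by positivity)
  _ = 1 := inv_mul_cancel₀ (ne_of_gt hν)

lemma E_bound (z : ℝ) : |∫ t in Set.Icc (0:ℝ) 1, deriv (ff t) z| ≤ 1 := by
  haveI : IsFiniteMeasure (volume.restrict (Set.Icc (0:ℝ) 1)) := by
    constructor
    rw [Measure.restrict_apply_univ]
    simp [Real.volume_Icc]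
  have h := norm_integral_le_of_norm_le_const (μ := volume.restrict (Set.Icc (0:ℝ) 1))
    (f := fun t => deriv (ff t) z) (C := 1)
    (ae_of_all _ (fun t => by rw [Real.norm_eq_abs]; exact abs_deriv_ff_le t z))
  rw [Real.norm_eq_abs] at h
  refine h.trans ?_
  rw [measureReal_restrict_apply_univ]
  simp [Real.volume_Icc]

lemma LL_le_one {ν j : ℕ} (hj : j ≤ MM ν) : LL ν j ≤ 1 := by
  have hM : (0:ℝ) < MM ν := by exact_mod_cast MM_pos ν
  have h1 : (j:ℝ) / MM ν ≤ 1 := by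
    rw [div_le_one hM]; exact_mod_cast hj
  have h2 : (2:ℝ) ≤ 2^(ν+1) := by
    calc (2:ℝ) = 2^1 := (pow_one 2).symm
    _ ≤ 2^(ν+1) := pow_le_pow_right₀ (by norm_num) (by omega)
  rw [LL, div_le_one (by positivity)]
  linarith

lemma good_piece {ν : ℕ} (hν : 1 ≤ ν) (q : ℕ → ℝ) (hq : ∀ i, q i ∈ Set.Ico (0:ℝ) 1) :
    ∃ (x : ℝ) (U : Set ℝ),
      x ∈ Set.Icc (0:ℝ) 1 ∧
      Metric.closedBall x (dd ν) ⊆ U ∧ x ∈ U ∧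
      (∀ t, ContDiffOn ℝ 1 (ff t) (Metric.closedBall x (dd ν))) ∧
      (∀ y ∈ U, ∀ i < ν, deriv (ff (q i)) y = 1) ∧
      (∀ y ∈ U, (∫ t in Set.Icc (0:ℝ) 1, deriv (ff t) y) ≤ 0 ∧
        (-1:ℝ) ≤ ∫ t in Set.Icc (0:ℝ) 1, deriv (ff t) y) := by
  classical
  have hB1 : 0 < 2 * ν := by omega
  set c : ℕ → ℕ := fun i => (⌊(2 * (ν:ℝ)) * q i⌋).toNat with hc
  have hclt : ∀ i, c i < 2 * ν := by
    intro i
    have h1 : (0:ℝ) ≤ q i := (hq i).1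
    have h2 : q i < 1 := (hq i).2
    have h3 : (2 * (ν:ℝ)) * q i < ((2 * ν : ℕ) : ℝ) := by
      push_cast
      nlinarith [show (0:ℝ) < 2 * ν by positivity]
    have h4 : ⌊(2 * (ν:ℝ)) * q i⌋ < ((2 * ν : ℕ) : ℤ) := Int.floor_lt.2 (by exact_mod_cast h3)
    simp only [hc]
    omega
  set j : ℕ := ∑ i ∈ Finset.range ν, c i * (2*ν)^i with hj
  have hjlt : j < MM ν := by
    rw [MM]
    exact sum_digits_lt (2*ν) c hclt ν
  have hdig : ∀ k, k < ν → c k ∈ DDf ν j := by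
    intro k hk
    rw [DDf, Finset.mem_image]
    exact ⟨k, Finset.mem_range.2 hk, digit_extract (2*ν) hB1 c hclt ν k hk⟩
  set L := LL ν j with hL
  set R := LL ν (j+1) with hR
  have hRL : R = L + 4 * dd ν := LL_succ ν j
  set x := L + 2 * dd ν with hx
  have hd := dd_pos ν
  refine ⟨x, Set.Ioo L R, ?_, ?_, ?_, ?_, ?_, ?_⟩
  · constructor
    · have := LL_pos ν j
      rw [hx]; linarith
    · have : x < R := by rw [hx, hRL]; linarith
      exact le_of_lt (lt_of_lt_of_le this (LL_le_one (by omega)))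
  · intro y hy
    rw [Metric.mem_closedBall, Real.dist_eq, abs_le] at hy
    constructor
    · linarith [hy.1]
    · linarith [hy.2]
  · constructor
    · linarith
    · linarith
  · intro t
    apply contDiffOn_of_affine (c := ff t L) (m := hh ν j t) (L := L)
    intro y hy
    rw [Metric.mem_closedBall, Real.dist_eq, abs_le] at hy
    apply ff_affine hν hjlt
    constructor
    · linarith [hy.1]
    · have : y < R := by linarith [hy.2]
      exact this
  · intro y hy i hi
    have hder : deriv (ff (q i)) y = hh ν j (q i) := by
      apply deriv_of_affine isOpen_Ioo hy
      intro z hz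
      exact ff_affine hν hjlt _ ⟨hz.1.le, hz.2⟩
    rw [hder]
    exact hh_one (hq i).1 (hdig i hi)
  · intro y hy
    have hder : (fun t => deriv (ff t) y) = hh ν j := by
      funext t
      apply deriv_of_affine isOpen_Ioo hy
      intro z hz
      exact ff_affine hν hjlt _ ⟨hz.1.le, hz.2⟩
    rw [show (∫ t in Set.Icc (0:ℝ) 1, deriv (ff t) y) = ∫ t in Set.Icc (0:ℝ) 1, hh ν j t from by rw [hder]]
    exact ⟨(integral_hh ν j hν).1, (integral_hh ν j hν).2⟩

lemma D_nonempty (ν : ℕ) :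
    (1:ℝ) ∈ Set.Icc (0:ℝ) 1 ∧ ∀ t ∈ Set.Icc (0:ℝ) 1,
      ContDiffOn ℝ 1 (ff t) (Metric.closedBall 1 (dd ν)) := by
  refine ⟨by norm_num, fun t _ => ?_⟩
  apply contDiffOn_of_affine (c := ff t 2⁻¹) (m := 1) (L := 2⁻¹)
  intro y hy
  rw [Metric.mem_closedBall, Real.dist_eq, abs_le] at hy
  have hd8 := dd_le ν
  have hd0 := dd_pos ν
  exact ff_affine_top t (by linarith [hy.1])


end Aux

/-- for any i.i.d. sequence of uniform random variables on `[0,1]` on a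
complete probability space, there exist a Carathéodory `f : [0,1] × ℝ → ℝ` with `f(ξ,·)`
1-Lipschitz, and `δ^ν ∈ (0,1]` decreasing to `0`, with each
`D^ν = {x ∈ [0,1] : f(ξ,·) is C¹ on B(x,δ^ν) for all ξ ∈ [0,1]}` nonempty, such that for
every sequence `0 ≤ r^ν ≤ δ^ν`, almost surely both
`liminf_ν sup_{x ∈ D^ν} inf_{y ∈ B(x,r^ν)} |ν⁻¹ Σ ∂f(ξ^i,x) − E[∂f(ξ^1,y)]| ≥ 1/2` and
`liminf_ν sup_{x ∈ D^ν} inf_{y ∈ B(x,r^ν)} |E[∂f(ξ^1,x)] − ν⁻¹ Σ ∂f(ξ^i,y)| ≥ 1/2` hold. -/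
theorem stmt_1
    {Ω : Type*} [MeasurableSpace Ω] (P : Measure Ω) [IsProbabilityMeasure P]
    (hPcomp : P.IsComplete)
    (ξ : ℕ → Ω → ℝ) (hmeas : ∀ i, Measurable (ξ i))
    (hindep : iIndepFun ξ P)
    (hunif : ∀ i, Measure.map (ξ i) P = volume.restrict (Set.Icc (0 : ℝ) 1)) :
    ∃ (f : ℝ → ℝ → ℝ) (δ : ℕ → ℝ) (D : ℕ → Set ℝ),
      (∀ t ∈ Set.Icc (0 : ℝ) 1, Continuous (f t)) ∧
      (∀ x : ℝ, Measurable (fun t : Set.Icc (0 : ℝ) 1 => f t x)) ∧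
      (∀ t ∈ Set.Icc (0 : ℝ) 1, LipschitzWith 1 (f t)) ∧
      (∀ ν, δ ν ∈ Set.Ioc (0 : ℝ) 1) ∧ Antitone δ ∧ Tendsto δ atTop (nhds 0) ∧
      (D = fun ν => {x ∈ Set.Icc (0 : ℝ) 1 |
        ∀ t ∈ Set.Icc (0 : ℝ) 1, ContDiffOn ℝ 1 (f t) (Metric.closedBall x (δ ν))}) ∧
      (∀ ν : ℕ, (D ν).Nonempty) ∧
      (∀ r : ℕ → ℝ, (∀ ν, 0 ≤ r ν ∧ r ν ≤ δ ν) →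
        ∀ᵐ ω ∂P,
          (1 : ℝ) / 2 ≤
            atTop.liminf (fun ν : ℕ =>
              ⨆ x : (D ν), ⨅ y : Metric.closedBall (x : ℝ) (r ν),
                |(ν : ℝ)⁻¹ * (∑ i ∈ Finset.range ν, deriv (f (ξ i ω)) (x : ℝ)) -
                  (∫ t in Set.Icc (0 : ℝ) 1, deriv (f t) (y : ℝ))|) ∧
          (1 : ℝ) / 2 ≤
            atTop.liminf (fun ν : ℕ =>
              ⨆ x : (D ν), ⨅ y : Metric.closedBall (x : ℝ) (r ν),
                |(∫ t in Set.Icc (0 : ℝ) 1, deriv (f t) (x : ℝ)) -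
                  (ν : ℝ)⁻¹ * ∑ i ∈ Finset.range ν, deriv (f (ξ i ω)) (y : ℝ)|)) := by
  classical
  set D : ℕ → Set ℝ := fun ν => {x ∈ Set.Icc (0 : ℝ) 1 |
        ∀ t ∈ Set.Icc (0 : ℝ) 1, ContDiffOn ℝ 1 (ff t) (Metric.closedBall x (dd ν))} with hD
  have hNE : ∀ ν : ℕ, (D ν).Nonempty := fun ν => ⟨1, (D_nonempty ν).1, (D_nonempty ν).2⟩
  refine ⟨ff, dd, D, fun t _ => (ff_lipschitz t).continuous,
    fun x => (measurable_ff_x x).comp measurable_subtype_coe,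
    fun t _ => ff_lipschitz t,
    fun ν => ⟨dd_pos ν, (dd_le ν).trans (by norm_num)⟩,
    dd_anti, dd_tendsto, hD, hNE, ?_⟩
  intro r hr
  -- a.s. event: all samples in Ico 0 1
  have hae : ∀ᵐ ω ∂P, ∀ i, ξ i ω ∈ Set.Ico (0:ℝ) 1 := by
    rw [MeasureTheory.ae_all_iff]
    intro i
    rw [MeasureTheory.ae_iff]
    have hset : {ω | ¬ ξ i ω ∈ Set.Ico (0:ℝ) 1} = ξ i ⁻¹' (Set.Ico (0:ℝ) 1)ᶜ := rfl
    rw [hset, ← Measure.map_apply (hmeas i) measurableSet_Ico.compl, hunif i,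
      Measure.restrict_apply measurableSet_Ico.compl]
    have hsub : (Set.Ico (0:ℝ) 1)ᶜ ∩ Set.Icc (0:ℝ) 1 ⊆ {(1:ℝ)} := by
      intro z hz
      obtain ⟨hz1, hz2⟩ := hz
      simp only [Set.mem_compl_iff, Set.mem_Ico, not_and, not_lt] at hz1
      have := hz1 hz2.1
      simp only [Set.mem_singleton_iff]
      linarith [hz2.2]
    exact le_antisymm ((measure_mono hsub).trans (by simp)) (by positivity)
  filter_upwards [hae] with ω hω
  -- nonempty instances
  have hballne : ∀ (x : ℝ) (ν : ℕ), Nonempty (Metric.closedBall x (r ν)) :=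
    fun x ν => ⟨⟨x, Metric.mem_closedBall_self (hr ν).1⟩⟩
  have hbddb : ∀ (F : ℝ → ℝ) (x : ℝ) (ν : ℕ),
      BddBelow (Set.range (fun y : Metric.closedBall x (r ν) => |F (y : ℝ)|)) := by
    intro F x ν
    refine ⟨0, ?_⟩
    rintro v ⟨y, rfl⟩
    exact abs_nonneg _
  constructor
  · -- first statement
    apply le_liminf_of_le
    · apply Filter.IsBoundedUnder.isCoboundedUnder_ge
      refine ⟨2, Filter.eventually_map.2 (Filter.Eventually.of_forall (fun ν => ?_))⟩
      haveI := (hNE ν).to_subtype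
      haveI := hballne
      apply ciSup_le
      intro x
      refine ciInf_le_of_le ⟨0, by rintro v ⟨y, rfl⟩; exact abs_nonneg _⟩ ⟨(x:ℝ), Metric.mem_closedBall_self (hr ν).1⟩ ?_
      calc |(ν : ℝ)⁻¹ * (∑ i ∈ Finset.range ν, deriv (ff (ξ i ω)) (x : ℝ)) -
              (∫ t in Set.Icc (0 : ℝ) 1, deriv (ff t) (x : ℝ))|
          ≤ |(ν : ℝ)⁻¹ * (∑ i ∈ Finset.range ν, deriv (ff (ξ i ω)) (x : ℝ))| +
            |∫ t in Set.Icc (0 : ℝ) 1, deriv (ff t) (x : ℝ)| := abs_sub _ _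
        _ ≤ 1 + 1 := add_le_add (avg_bound ν _ _) (E_bound _)
        _ = 2 := by norm_num
    · filter_upwards [Filter.eventually_ge_atTop 1] with ν hν
      obtain ⟨xs, U, hxIcc, hball, hxU, hC1, hder1, hE⟩ := good_piece hν (fun i => ξ i ω) hω
      have hxD : xs ∈ D ν := ⟨hxIcc, fun t _ => hC1 t⟩
      haveI := hballne
      apply le_ciSup_of_le ?_ (⟨xs, hxD⟩ : D ν)
      · apply le_ciInf
        rintro ⟨y, hy⟩
        have hyU : y ∈ U := hball (Metric.closedBall_subset_closedBall (hr ν).2 hy)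
        have havg : (ν : ℝ)⁻¹ * (∑ i ∈ Finset.range ν, deriv (ff (ξ i ω)) xs) = 1 := by
          rw [Finset.sum_congr rfl (fun i hi => hder1 xs hxU i (Finset.mem_range.1 hi))]
          rw [Finset.sum_const, Finset.card_range, nsmul_eq_mul, mul_one]
          exact inv_mul_cancel₀ (show ((ν:ℝ)) ≠ 0 by exact_mod_cast (show ν ≠ 0 by omega))
        have hEy := hE y hyU
        show (1:ℝ)/2 ≤ |(ν : ℝ)⁻¹ * (∑ i ∈ Finset.range ν, deriv (ff (ξ i ω)) xs) -
          (∫ t in Set.Icc (0 : ℝ) 1, deriv (ff t) y)|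
        rw [havg]
        refine le_trans ?_ (le_abs_self _)
        linarith [hEy.1]
      · refine ⟨2, ?_⟩
        rintro v ⟨x, rfl⟩
        refine ciInf_le_of_le ⟨0, by rintro v ⟨y, rfl⟩; exact abs_nonneg _⟩ ⟨(x:ℝ), Metric.mem_closedBall_self (hr ν).1⟩ ?_
        calc |(ν : ℝ)⁻¹ * (∑ i ∈ Finset.range ν, deriv (ff (ξ i ω)) (x : ℝ)) -
                (∫ t in Set.Icc (0 : ℝ) 1, deriv (ff t) (x : ℝ))|
            ≤ |(ν : ℝ)⁻¹ * (∑ i ∈ Finset.range ν, deriv (ff (ξ i ω)) (x : ℝ))| +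
              |∫ t in Set.Icc (0 : ℝ) 1, deriv (ff t) (x : ℝ)| := abs_sub _ _
          _ ≤ 1 + 1 := add_le_add (avg_bound ν _ _) (E_bound _)
          _ = 2 := by norm_num
  · -- second statement
    apply le_liminf_of_le
    · apply Filter.IsBoundedUnder.isCoboundedUnder_ge
      refine ⟨2, Filter.eventually_map.2 (Filter.Eventually.of_forall (fun ν => ?_))⟩
      haveI := (hNE ν).to_subtype
      haveI := hballne
      apply ciSup_le
      intro x
      refine ciInf_le_of_le ⟨0, by rintro v ⟨y, rfl⟩; exact abs_nonneg _⟩ ⟨(x:ℝ), Metric.mem_closedBall_self (hr ν).1⟩ ?_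
      calc |(∫ t in Set.Icc (0 : ℝ) 1, deriv (ff t) (x : ℝ)) -
              (ν : ℝ)⁻¹ * ∑ i ∈ Finset.range ν, deriv (ff (ξ i ω)) (x : ℝ)|
          ≤ |∫ t in Set.Icc (0 : ℝ) 1, deriv (ff t) (x : ℝ)| +
            |(ν : ℝ)⁻¹ * ∑ i ∈ Finset.range ν, deriv (ff (ξ i ω)) (x : ℝ)| := abs_sub _ _
        _ ≤ 1 + 1 := add_le_add (E_bound _) (avg_bound ν _ _)
        _ = 2 := by norm_num
    · filter_upwards [Filter.eventually_ge_atTop 1] with ν hν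
      obtain ⟨xs, U, hxIcc, hball, hxU, hC1, hder1, hE⟩ := good_piece hν (fun i => ξ i ω) hω
      have hxD : xs ∈ D ν := ⟨hxIcc, fun t _ => hC1 t⟩
      haveI := hballne
      apply le_ciSup_of_le ?_ (⟨xs, hxD⟩ : D ν)
      · apply le_ciInf
        rintro ⟨y, hy⟩
        have hyU : y ∈ U := hball (Metric.closedBall_subset_closedBall (hr ν).2 hy)
        have havg : (ν : ℝ)⁻¹ * (∑ i ∈ Finset.range ν, deriv (ff (ξ i ω)) y) = 1 := by
          rw [Finset.sum_congr rfl (fun i hi => hder1 y hyU i (Finset.mem_range.1 hi))]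
          rw [Finset.sum_const, Finset.card_range, nsmul_eq_mul, mul_one]
          exact inv_mul_cancel₀ (show ((ν:ℝ)) ≠ 0 by exact_mod_cast (show ν ≠ 0 by omega))
        have hEx := hE xs hxU
        show (1:ℝ)/2 ≤ |(∫ t in Set.Icc (0 : ℝ) 1, deriv (ff t) xs) -
          (ν : ℝ)⁻¹ * ∑ i ∈ Finset.range ν, deriv (ff (ξ i ω)) y|
        rw [havg]
        rw [abs_sub_comm]
        refine le_trans ?_ (le_abs_self _)
        linarith [hEx.1]
      · refine ⟨2, ?_⟩
        rintro v ⟨x, rfl⟩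
        refine ciInf_le_of_le ⟨0, by rintro v ⟨y, rfl⟩; exact abs_nonneg _⟩ ⟨(x:ℝ), Metric.mem_closedBall_self (hr ν).1⟩ ?_
        calc |(∫ t in Set.Icc (0 : ℝ) 1, deriv (ff t) (x : ℝ)) -
                (ν : ℝ)⁻¹ * ∑ i ∈ Finset.range ν, deriv (ff (ξ i ω)) (x : ℝ)|
            ≤ |∫ t in Set.Icc (0 : ℝ) 1, deriv (ff t) (x : ℝ)| +
              |(ν : ℝ)⁻¹ * ∑ i ∈ Finset.range ν, deriv (ff (ξ i ω)) (x : ℝ)| := abs_sub _ _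
          _ ≤ 1 + 1 := add_le_add (E_bound _) (avg_bound ν _ _)
          _ = 2 := by norm_num
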